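/- Robustness to misspecified outcome models: if the propensity components are correct, i.e. π̂₀(w) = π_A(a | w), π̂₁(w) = π_A(a' | w) for all w ∈ 𝕎 and π̂ᴹ₀(m, w) = π_A(a | m, w), π̂ᴹ₁(m, w) = π_A(a' | m, w) for all m ∈ 𝕄, w ∈ 𝕎, then for arbitrary b̂ : 𝕄 × 𝕎 → ℝ and ξ̂ : 𝕎 → ℝ the AIPW functional is exactly unbiased: Ψ(π̂, b̂, ξ̂) = ψ. (Population version of Corollary 1, case (i).) -/

import Mathlib

open MeasureTheory ProbabilityTheory
open scoped ENNReal BigOperators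

/-!
The integrand of `Ψ` is affine in `Ŷ` with coefficients that depend only on the cell
`(A, M, W)`, and `Ŷ` only enters on cells with `A = a`; so `Ψ` is a finite sum over cells in
which `Ŷ` is replaced by `b`. With the true propensities, the weight `r̂ / π̂₀` on the cell
`(a, m, w)` is `P(A = a', m, w) / (P(A = a, m, w) · π_A(a' | w))`: it transports the residual
`b − b̂` to the cell `(a', m, w)`, where it cancels the `b̂` of the second term, and what is
left of `ξ̂` cancels because the inverse-propensity weights of `P(A = a', M = m, W = w)` sum to
`P(W = w)`.
-/

section Fibres

variable {Ω β : Type*} [MeasurableSpace Ω] {P : Measure Ω}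

theorem cond_toReal_eq_div {s : Set Ω} (hs : MeasurableSet s) (t : Set Ω) :
    ((P[|s]) t).toReal = P.real (s ∩ t) / P.real s := by
  rw [cond_apply hs, ENNReal.toReal_mul, ENNReal.toReal_inv, inv_mul_eq_div, measureReal_def,
    measureReal_def]

variable [MeasurableSpace β] [Fintype β] [MeasurableSingletonClass β] {T : Ω → β}

theorem integral_eq_sum_setIntegral_fiber (hT : Measurable T) {f : Ω → ℝ} (hf : Integrable f P) :
    ∫ ω, f ω ∂P = ∑ t, ∫ ω in T ⁻¹' {t}, f ω ∂P := by
  rw [← integral_iUnion_fintype (fun t => hT (measurableSet_singleton t))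
    (pairwise_disjoint_fiber T) (fun _ => hf.integrableOn), ← Set.preimage_iUnion,
    Set.iUnion_of_singleton, Set.preimage_univ, setIntegral_univ]

variable [IsFiniteMeasure P]

theorem setIntegral_eq_measureReal_mul_integral_cond (s : Set Ω) (f : Ω → ℝ) :
    ∫ ω in s, f ω ∂P = P.real s * ∫ ω, f ω ∂(P[|s]) := by
  rcases eq_or_ne (P s) 0 with hs | hs
  · simp [Measure.restrict_eq_zero.mpr hs, measureReal_def, hs]
  · rw [ProbabilityTheory.cond, integral_smul_measure, smul_eq_mul, ENNReal.toReal_inv,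
      ← measureReal_def, ← mul_assoc,
      mul_inv_cancel₀ (by simpa [measureReal_def, ENNReal.toReal_eq_zero_iff] using hs), one_mul]

theorem measureReal_eq_sum_inter_fiber (hT : Measurable T) (s : Set Ω) :
    P.real s = ∑ t, P.real (s ∩ T ⁻¹' {t}) := by
  have hsum := sum_measureReal_preimage_singleton (μ := P.restrict s) Finset.univ
    (fun t _ => hT (measurableSet_singleton t))
  simp only [Finset.coe_univ, Set.preimage_univ, measureReal_restrict_apply_univ] at hsum
  rw [← hsum]
  refine Finset.sum_congr rfl fun t _ => ?_
  rw [measureReal_restrict_apply (hT (measurableSet_singleton t)), Set.inter_comm]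

theorem integral_comp_mul_add_comp_eq_sum (hT : Measurable T) {Y : Ω → ℝ} (hY : Integrable Y P)
    (c d : β → ℝ) :
    ∫ ω, c (T ω) * Y ω + d (T ω) ∂P
      = ∑ t, P.real (T ⁻¹' {t}) * (c t * ∫ ω, Y ω ∂(P[|T ⁻¹' {t}]) + d t) := by
  obtain ⟨C, hC⟩ := Finite.exists_le fun t => ‖c t‖
  have hint : Integrable (fun ω => c (T ω) * Y ω + d (T ω)) P :=
    (hY.bdd_mul ((measurable_of_finite c).comp hT).aestronglyMeasurable
      (ae_of_all _ fun ω => hC (T ω))).add (Integrable.of_finite.comp_measurable hT)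
  rw [integral_eq_sum_setIntegral_fiber hT hint]
  refine Finset.sum_congr rfl fun t _ => ?_
  have hfib : MeasurableSet (T ⁻¹' {t}) := hT (measurableSet_singleton t)
  rw [setIntegral_congr_fun hfib (g := fun ω => c t * Y ω + d t) fun ω hω => by rw [hω],
    integral_add (hY.integrableOn.const_mul _) (integrableOn_const (measure_ne_top _ _)),
    integral_const_mul, setIntegral_const, setIntegral_eq_measureReal_mul_integral_cond,
    smul_eq_mul]
  ring

end Fibres

section Cells

variable {Ω 𝔸 𝕄 𝕎 : Type*} [MeasurableSpace Ω] {P : Measure Ω} {A : Ω → 𝔸} {M : Ω → 𝕄}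
  {W : Ω → 𝕎}

def cellProb (P : Measure Ω) (A : Ω → 𝔸) (M : Ω → 𝕄) (W : Ω → 𝕎) (α : 𝔸) (m : 𝕄) (w : 𝕎) :
    ℝ :=
  P.real {ω | A ω = α ∧ M ω = m ∧ W ω = w}

variable [IsFiniteMeasure P]

theorem measureReal_M_W_eq_sum_cellProb [Fintype 𝔸] [MeasurableSpace 𝔸]
    [MeasurableSingletonClass 𝔸] (hA : Measurable A) (m : 𝕄) (w : 𝕎) :
    P.real {ω | M ω = m ∧ W ω = w} = ∑ α, cellProb P A M W α m w := by
  rw [measureReal_eq_sum_inter_fiber hA]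
  refine Finset.sum_congr rfl fun α _ => congrArg P.real ?_
  ext ω
  simp only [Set.mem_inter_iff, Set.mem_ofPred_eq, Set.mem_preimage, Set.mem_singleton_iff]
  tauto

theorem measureReal_A_W_eq_sum_cellProb [Fintype 𝕄] [MeasurableSpace 𝕄]
    [MeasurableSingletonClass 𝕄] (hM : Measurable M) (α : 𝔸) (w : 𝕎) :
    P.real {ω | A ω = α ∧ W ω = w} = ∑ m, cellProb P A M W α m w := by
  rw [measureReal_eq_sum_inter_fiber hM]
  refine Finset.sum_congr rfl fun m _ => congrArg P.real ?_
  ext ω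
  simp only [Set.mem_inter_iff, Set.mem_ofPred_eq, Set.mem_preimage, Set.mem_singleton_iff]
  tauto

theorem measureReal_W_eq_sum_cellProb [Fintype 𝔸] [MeasurableSpace 𝔸]
    [MeasurableSingletonClass 𝔸] [Fintype 𝕄] [MeasurableSpace 𝕄] [MeasurableSingletonClass 𝕄]
    (hA : Measurable A) (hM : Measurable M) (w : 𝕎) :
    P.real {ω | W ω = w} = ∑ m, ∑ α, cellProb P A M W α m w := by
  rw [measureReal_eq_sum_inter_fiber hM]
  refine Finset.sum_congr rfl fun m _ => ?_
  rw [← measureReal_M_W_eq_sum_cellProb hA]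
  congr 1
  ext ω
  simp only [Set.mem_inter_iff, Set.mem_ofPred_eq, Set.mem_preimage, Set.mem_singleton_iff]
  tauto

variable [MeasurableSpace 𝔸] [MeasurableSingletonClass 𝔸] [MeasurableSpace 𝕄]
  [MeasurableSingletonClass 𝕄] [MeasurableSpace 𝕎] [MeasurableSingletonClass 𝕎]

theorem cond_A_given_W_toReal [Fintype 𝔸] [Fintype 𝕄] (hA : Measurable A) (hM : Measurable M)
    (hW : Measurable W) (α : 𝔸) (w : 𝕎) :
    ((P[|{ω | W ω = w}]) {ω | A ω = α}).toReal
      = (∑ m, cellProb P A M W α m w) / ∑ m, ∑ α', cellProb P A M W α' m w := by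
  rw [cond_toReal_eq_div (s := {ω | W ω = w}) (hW (measurableSet_singleton w)),
    measureReal_W_eq_sum_cellProb hA hM, ← measureReal_A_W_eq_sum_cellProb hM, Set.inter_comm]
  rfl

theorem cond_A_given_M_W_toReal [Fintype 𝔸] (hA : Measurable A) (hM : Measurable M)
    (hW : Measurable W) (α : 𝔸) (m : 𝕄) (w : 𝕎) :
    ((P[|{ω | M ω = m ∧ W ω = w}]) {ω | A ω = α}).toReal
      = cellProb P A M W α m w / ∑ α', cellProb P A M W α' m w := by
  rw [cond_toReal_eq_div (s := {ω | M ω = m ∧ W ω = w})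
      ((hM (measurableSet_singleton m)).inter (hW (measurableSet_singleton w))),
    measureReal_M_W_eq_sum_cellProb hA, cellProb]
  congr 2
  ext ω
  simp only [Set.mem_inter_iff, Set.mem_ofPred_eq]
  tauto

theorem cond_M_given_A_W_toReal [Fintype 𝕄] (hA : Measurable A) (hM : Measurable M)
    (hW : Measurable W) (α : 𝔸) (m : 𝕄) (w : 𝕎) :
    ((P[|{ω | A ω = α ∧ W ω = w}]) {ω | M ω = m}).toReal
      = cellProb P A M W α m w / ∑ m', cellProb P A M W α m' w := by
  rw [cond_toReal_eq_div (s := {ω | A ω = α ∧ W ω = w})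
      ((hA (measurableSet_singleton α)).inter (hW (measurableSet_singleton w))),
    measureReal_A_W_eq_sum_cellProb hM, cellProb]
  congr 2
  ext ω
  simp only [Set.mem_inter_iff, Set.mem_ofPred_eq]
  tauto

theorem integral_aipw_eq_sum_cellProb [Fintype 𝔸] [DecidableEq 𝔸] [Fintype 𝕄] [Fintype 𝕎]
    (hA : Measurable A) (hM : Measurable M)
    (hW : Measurable W) {Y : Ω → ℝ} (hY : Integrable Y P) (a a' : 𝔸) (π₀ π₁ : 𝕎 → ℝ)
    (r bhat : 𝕄 → 𝕎 → ℝ) (ξhat : 𝕎 → ℝ) :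
    ∫ ω, ((if A ω = a then (1 : ℝ) else 0) / π₀ (W ω)) * r (M ω) (W ω)
            * (Y ω - bhat (M ω) (W ω))
          + ((if A ω = a' then (1 : ℝ) else 0) / π₁ (W ω))
            * (bhat (M ω) (W ω) - ξhat (W ω))
          + ξhat (W ω) ∂P
      = ∑ w, ∑ m, (r m w / π₀ w * cellProb P A M W a m w
            * (∫ ω, Y ω ∂(P[|{ω | A ω = a ∧ M ω = m ∧ W ω = w}]) - bhat m w)
          + (bhat m w - ξhat w) / π₁ w * cellProb P A M W a' m w
          + ξhat w * ∑ α, cellProb P A M W α m w) := by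
  have hcell : ∀ w m α, (fun ω => (W ω, M ω, A ω)) ⁻¹' {(w, m, α)}
      = {ω | A ω = α ∧ M ω = m ∧ W ω = w} := by
    intro w m α
    ext ω
    simp only [Set.mem_preimage, Set.mem_singleton_iff, Prod.mk.injEq, Set.mem_ofPred_eq]
    tauto
  let c : 𝕎 × 𝕄 × 𝔸 → ℝ := fun t => if t.2.2 = a then r t.2.1 t.1 / π₀ t.1 else 0
  let d : 𝕎 × 𝕄 × 𝔸 → ℝ := fun t => -(c t * bhat t.2.1 t.1)
    + (if t.2.2 = a' then (bhat t.2.1 t.1 - ξhat t.1) / π₁ t.1 else 0) + ξhat t.1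
  calc _ = ∫ ω, c (W ω, M ω, A ω) * Y ω + d (W ω, M ω, A ω) ∂P := by
        refine integral_congr_ae (ae_of_all _ fun ω => ?_)
        simp only [c, d]
        split_ifs <;> ring
    _ = _ := integral_comp_mul_add_comp_eq_sum (hW.prodMk (hM.prodMk hA)) hY c d
    _ = _ := by
        simp only [Fintype.sum_prod_type, hcell, cellProb]
        refine Finset.sum_congr rfl fun w _ => Finset.sum_congr rfl fun m _ => ?_
        simp only [c, d, ite_mul, zero_mul, mul_add, mul_ite, mul_zero, mul_neg,
          Finset.sum_add_distrib, Finset.sum_ite_eq', Finset.mem_univ, if_true,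
          Finset.sum_neg_distrib, ← Finset.sum_mul]
        ring

end Cells

theorem sum_aipw_stratum_eq_of_true_propensities {𝔸 𝕄 : Type*} [Fintype 𝔸] [Fintype 𝕄]
    [Nonempty 𝕄]
    {p : 𝔸 → 𝕄 → ℝ} (hp : ∀ α m, 0 < p α m) {π : 𝔸 → ℝ} {πM : 𝔸 → 𝕄 → ℝ}
    (hπ : ∀ α, π α = (∑ m, p α m) / ∑ m, ∑ α', p α' m)
    (hπM : ∀ α m, πM α m = p α m / ∑ α', p α' m) (a a' : 𝔸) (b bhat : 𝕄 → ℝ) (ξhat : ℝ) :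
    ∑ m, (πM a' m * π a / (πM a m * π a') / π a * p a m * (b m - bhat m)
        + (bhat m - ξhat) / π a' * p a' m + ξhat * ∑ α, p α m)
      = (∑ m, ∑ α, p α m) * ∑ m, b m * (p a' m / ∑ m', p a' m') := by
  have hq : ∀ m, 0 < ∑ α, p α m := fun m =>
    Finset.sum_pos (fun α _ => hp α m) ⟨a, Finset.mem_univ a⟩
  have hs : ∀ α, 0 < ∑ m, p α m := fun α =>
    Finset.sum_pos (fun m _ => hp α m) Finset.univ_nonempty
  have ht : 0 < ∑ m, ∑ α, p α m := Finset.sum_pos (fun m _ => hq m) Finset.univ_nonempty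
  have hbalance : ∀ m, πM a' m * π a / (πM a m * π a') / π a * p a m = p a' m / π a' := by
    intro m
    rw [hπ, hπ, hπM, hπM]
    field_simp [(hp a m).ne', (hq m).ne', (hs a).ne', (hs a').ne', ht.ne']
  have hmass : ∑ m, p a' m / π a' = ∑ m, ∑ α, p α m := by
    rw [← Finset.sum_div, hπ]
    field_simp [(hs a').ne']
  calc _ = ∑ m, (p a' m / π a' * b m + ξhat * ((∑ α, p α m) - p a' m / π a')) :=
        Finset.sum_congr rfl fun m _ => by rw [hbalance]; ring
    _ = ∑ m, p a' m / π a' * b m + ξhat * ((∑ m, ∑ α, p α m) - ∑ m, p a' m / π a') := by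
        rw [Finset.sum_add_distrib, ← Finset.mul_sum, Finset.sum_sub_distrib]
    _ = _ := by
        rw [hmass, sub_self, mul_zero, add_zero, Finset.mul_sum]
        refine Finset.sum_congr rfl fun m _ => ?_
        rw [hπ]
        field_simp [(hs a').ne', ht.ne']

theorem aipw_robust_to_outcome_models_general
    {Ω : Type*} [MeasurableSpace Ω] (P : Measure Ω) [IsProbabilityMeasure P]
    {𝕄 𝕎 : Type*} [Fintype 𝕄] [Nonempty 𝕄] [MeasurableSpace 𝕄] [MeasurableSingletonClass 𝕄]
    [Fintype 𝕎] [MeasurableSpace 𝕎] [MeasurableSingletonClass 𝕎]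
    (A : Ω → Bool) (M : Ω → 𝕄) (W : Ω → 𝕎)
    (hA : Measurable A) (hM : Measurable M) (hW : Measurable W)
    (positivity : ∀ (α : Bool) (m : 𝕄) (w : 𝕎),
      0 < P {ω | A ω = α ∧ M ω = m ∧ W ω = w})
    (a a' : Bool)
    (Y : Ω → ℝ) (hY_meas : Measurable Y) (hY_bdd : ∃ C : ℝ, ∀ ω, |Y ω| ≤ C)
    (πA : Bool → 𝕎 → ℝ)
    (hπA : ∀ (α : Bool) (w : 𝕎), πA α w = ((P[|{ω | W ω = w}]) {ω | A ω = α}).toReal)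
    (πAM : Bool → 𝕄 → 𝕎 → ℝ)
    (hπAM : ∀ (α : Bool) (m : 𝕄) (w : 𝕎),
      πAM α m w = ((P[|{ω | M ω = m ∧ W ω = w}]) {ω | A ω = α}).toReal)
    (b : 𝕄 → 𝕎 → ℝ)
    (hb : ∀ (m : 𝕄) (w : 𝕎),
      b m w = ∫ ω, Y ω ∂(P[|{ω | A ω = a ∧ M ω = m ∧ W ω = w}]))
    (ξ : 𝕎 → ℝ)
    (hξ : ∀ w : 𝕎,
      ξ w = ∑ m : 𝕄, b m w * ((P[|{ω | A ω = a' ∧ W ω = w}]) {ω | M ω = m}).toReal)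
    (ψ : ℝ) (hψ : ψ = ∑ w : 𝕎, (P {ω | W ω = w}).toReal * ξ w)
    -- estimated nuisance functions
    (πhat₀ πhat₁ : 𝕎 → ℝ)
    (πMhat₀ πMhat₁ : 𝕄 → 𝕎 → ℝ)
    (bhat : 𝕄 → 𝕎 → ℝ) (ξhat : 𝕎 → ℝ)
    (rhat : 𝕄 → 𝕎 → ℝ)
    (hrhat : ∀ (m : 𝕄) (w : 𝕎),
      rhat m w = (πMhat₁ m w * πhat₀ w) / (πMhat₀ m w * πhat₁ w))
    (Ψhat : ℝ)
    (hΨhat : Ψhat = ∫ ω,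
        ((if A ω = a then (1 : ℝ) else 0) / πhat₀ (W ω)) * rhat (M ω) (W ω)
            * (Y ω - bhat (M ω) (W ω))
          + ((if A ω = a' then (1 : ℝ) else 0) / πhat₁ (W ω))
            * (bhat (M ω) (W ω) - ξhat (W ω))
          + ξhat (W ω) ∂P)
    -- correctness of the propensity components
    (hcorrect₀ : ∀ w : 𝕎, πhat₀ w = πA a w)
    (hcorrect₁ : ∀ w : 𝕎, πhat₁ w = πA a' w)
    (hcorrectM₀ : ∀ (m : 𝕄) (w : 𝕎), πMhat₀ m w = πAM a m w)
    (hcorrectM₁ : ∀ (m : 𝕄) (w : 𝕎), πMhat₁ m w = πAM a' m w) :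
    Ψhat = ψ := by
  obtain ⟨C, hC⟩ := hY_bdd
  have hY : Integrable Y P := .of_bound hY_meas.aestronglyMeasurable C
    (ae_of_all _ fun ω => (Real.norm_eq_abs _).trans_le (hC ω))
  rw [hΨhat, integral_aipw_eq_sum_cellProb hA hM hW hY, hψ]
  refine Finset.sum_congr rfl fun w _ => ?_
  simp only [hrhat, hcorrect₀, hcorrect₁, hcorrectM₀, hcorrectM₁, ← hb, hξ,
    cond_M_given_A_W_toReal hA hM hW, ← measureReal_def, measureReal_W_eq_sum_cellProb hA hM]
  exact sum_aipw_stratum_eq_of_true_propensities (p := fun α m => cellProb P A M W α m w)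
    (π := fun α => πA α w) (πM := fun α m => πAM α m w)
    (fun α m => ENNReal.toReal_pos (positivity α m w).ne' (measure_ne_top _ _))
    (fun α => by rw [hπA, cond_A_given_W_toReal hA hM hW])
    (fun α m => by rw [hπAM, cond_A_given_M_W_toReal hA hM hW]) a a' _ _ _

/-- Population version of Corollary 1, case (i): if the propensity components
are correct, the AIPW functional is exactly unbiased for arbitrary outcome
models `b̂` and `ξ̂`. -/
theorem aipw_robust_to_outcome_models
    {Ω : Type*} [MeasurableSpace Ω] (P : Measure Ω) [IsProbabilityMeasure P]
    {𝕄 𝕎 : Type*} [Fintype 𝕄] [Nonempty 𝕄] [MeasurableSpace 𝕄] [MeasurableSingletonClass 𝕄]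
    [Fintype 𝕎] [Nonempty 𝕎] [MeasurableSpace 𝕎] [MeasurableSingletonClass 𝕎]
    (A : Ω → Bool) (M : Ω → 𝕄) (W : Ω → 𝕎)
    (hA : Measurable A) (hM : Measurable M) (hW : Measurable W)
    (positivity : ∀ (α : Bool) (m : 𝕄) (w : 𝕎),
      0 < P {ω | A ω = α ∧ M ω = m ∧ W ω = w})
    (a a' : Bool)
    (Y : Ω → ℝ) (hY_meas : Measurable Y) (hY_bdd : ∃ C : ℝ, ∀ ω, |Y ω| ≤ C)
    (πA : Bool → 𝕎 → ℝ)
    (hπA : ∀ (α : Bool) (w : 𝕎), πA α w = ((P[|{ω | W ω = w}]) {ω | A ω = α}).toReal)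
    (πAM : Bool → 𝕄 → 𝕎 → ℝ)
    (hπAM : ∀ (α : Bool) (m : 𝕄) (w : 𝕎),
      πAM α m w = ((P[|{ω | M ω = m ∧ W ω = w}]) {ω | A ω = α}).toReal)
    (b : 𝕄 → 𝕎 → ℝ)
    (hb : ∀ (m : 𝕄) (w : 𝕎),
      b m w = ∫ ω, Y ω ∂(P[|{ω | A ω = a ∧ M ω = m ∧ W ω = w}]))
    (ξ : 𝕎 → ℝ)
    (hξ : ∀ w : 𝕎,
      ξ w = ∑ m : 𝕄, b m w * ((P[|{ω | A ω = a' ∧ W ω = w}]) {ω | M ω = m}).toReal)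
    (ψ : ℝ) (hψ : ψ = ∑ w : 𝕎, (P {ω | W ω = w}).toReal * ξ w)
    -- estimated nuisance functions
    (πhat₀ πhat₁ : 𝕎 → ℝ)
    (hπhat₀ : ∀ w : 𝕎, πhat₀ w ∈ Set.Ioo (0 : ℝ) 1)
    (hπhat₁ : ∀ w : 𝕎, πhat₁ w ∈ Set.Ioo (0 : ℝ) 1)
    (πMhat₀ πMhat₁ : 𝕄 → 𝕎 → ℝ)
    (hπMhat₀ : ∀ (m : 𝕄) (w : 𝕎), πMhat₀ m w ∈ Set.Ioo (0 : ℝ) 1)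
    (hπMhat₁ : ∀ (m : 𝕄) (w : 𝕎), πMhat₁ m w ∈ Set.Ioo (0 : ℝ) 1)
    (bhat : 𝕄 → 𝕎 → ℝ) (ξhat : 𝕎 → ℝ)
    (rhat : 𝕄 → 𝕎 → ℝ)
    (hrhat : ∀ (m : 𝕄) (w : 𝕎),
      rhat m w = (πMhat₁ m w * πhat₀ w) / (πMhat₀ m w * πhat₁ w))
    (Ψhat : ℝ)
    (hΨhat : Ψhat = ∫ ω,
        ((if A ω = a then (1 : ℝ) else 0) / πhat₀ (W ω)) * rhat (M ω) (W ω)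
            * (Y ω - bhat (M ω) (W ω))
          + ((if A ω = a' then (1 : ℝ) else 0) / πhat₁ (W ω))
            * (bhat (M ω) (W ω) - ξhat (W ω))
          + ξhat (W ω) ∂P)
    -- correctness of the propensity components
    (hcorrect₀ : ∀ w : 𝕎, πhat₀ w = πA a w)
    (hcorrect₁ : ∀ w : 𝕎, πhat₁ w = πA a' w)
    (hcorrectM₀ : ∀ (m : 𝕄) (w : 𝕎), πMhat₀ m w = πAM a m w)
    (hcorrectM₁ : ∀ (m : 𝕄) (w : 𝕎), πMhat₁ m w = πAM a' m w) :
    Ψhat = ψ :=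
  aipw_robust_to_outcome_models_general P A M W hA hM hW positivity a a' Y hY_meas hY_bdd πA hπA πAM
    hπAM b hb ξ hξ ψ hψ πhat₀ πhat₁ πMhat₀ πMhat₁ bhat ξhat rhat hrhat Ψhat hΨhat hcorrect₀
    hcorrect₁ hcorrectM₀ hcorrectM₁
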